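/- arXiv:1402.2066 — 2 statements merged into one kernel-verified Lean document; each statement's English description precedes it below -/
import Mathlib

section
/- Every chordal graph admits a clique tree satisfying the clique intersection property: there exists a tree on the set of cliques C_1,...,C_l such that for every pair of distinct cliques C_i and C_j, the intersection C_i ∩ C_j is contained in every clique on the unique path between C_i and C_j in the tree. -/
open Finset

def SimpleGraph.IsChordal {V : Type*} (G : SimpleGraph V) : Prop :=
  ∀ (v : V) (w : G.Walk v v), w.IsCycle → 4 ≤ w.length →
    ∃ a b, a ∈ w.support ∧ b ∈ w.support ∧ G.Adj a b ∧ ¬ w.toSubgraph.Adj a b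

def SimpleGraph.IsMaxClique {V : Type*} (G : SimpleGraph V) (s : Finset V) : Prop :=
  G.IsClique ↑s ∧ ∀ t : Finset V, G.IsClique ↑t → s ⊆ t → s = t

/-!
By Dirac's argument a minimal separator of a chordal graph is a clique (two nonadjacent
vertices in it would close a chordless cycle through the two sides), so each side of it
contains a vertex whose neighbourhood is a clique; hence every vertex set `U` has a simplicial
vertex. Removing simplicial vertices one at a time orders the maximal cliques so that each
meets the union of its predecessors inside a single predecessor (running intersection). Joining
each clique to that predecessor gives a tree in which, for every vertex `x`, the cliques
containing `x` span a connected subgraph; as paths in a tree are unique, every path between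
two cliques containing `x` stays among cliques containing `x`.
-/

namespace SimpleGraph

variable {V : Type*} {G : SimpleGraph V}

def ReachableIn (G : SimpleGraph V) (W : Set V) (a b : V) : Prop :=
  ∃ p : G.Walk a b, ∀ z ∈ p.support, z ∈ W

namespace ReachableIn

variable {W : Set V} {a b c : V}

lemma refl (ha : a ∈ W) : G.ReachableIn W a a :=
  ⟨.nil, by simpa using ha⟩

lemma symm (h : G.ReachableIn W a b) : G.ReachableIn W b a := by
  obtain ⟨p, hp⟩ := h
  exact ⟨p.reverse, by simpa using hp⟩

lemma trans (hab : G.ReachableIn W a b) (hbc : G.ReachableIn W b c) : G.ReachableIn W a c := by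
  obtain ⟨p, hp⟩ := hab
  obtain ⟨q, hq⟩ := hbc
  refine ⟨p.append q, fun z hz => ?_⟩
  rcases (Walk.mem_support_append_iff _ _).1 hz with hz | hz
  exacts [hp z hz, hq z hz]

lemma of_adj (hab : G.Adj a b) (ha : a ∈ W) (hb : b ∈ W) : G.ReachableIn W a b :=
  ⟨hab.toWalk, by simp [ha, hb]⟩

lemma right_mem (h : G.ReachableIn W a b) : b ∈ W := by
  obtain ⟨p, hp⟩ := h
  exact hp b p.end_mem_support

lemma mono {W' : Set V} (h : G.ReachableIn W a b) (hW : W ⊆ W') : G.ReachableIn W' a b := by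
  obtain ⟨p, hp⟩ := h
  exact ⟨p, fun z hz => hW (hp z hz)⟩

lemma ne_and_not_adj_of_not_reachableIn {u w : V} (hu : G.ReachableIn W a u)
    (hw : G.ReachableIn W b w) (hsep : ¬ G.ReachableIn W a b) : u ≠ w ∧ ¬ G.Adj u w := by
  refine ⟨?_, fun huw => ?_⟩
  · rintro rfl
    exact hsep (hu.trans hw.symm)
  · exact hsep ((hu.trans (.of_adj huw hu.right_mem hw.right_mem)).trans hw.symm)

lemma reachableIn_setOf (h : G.ReachableIn W a b) :
    G.ReachableIn {z | G.ReachableIn W a z} a b := by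
  classical
  obtain ⟨p, hp⟩ := h
  exact ⟨p, fun z hz =>
    ⟨p.takeUntil z hz, fun y hy => hp y (p.support_takeUntil_subset_support hz hy)⟩⟩

end ReachableIn

namespace Walk

variable {W : Set V} {s a b x y : V}

lemma reachableIn_or_exists_adj (p : G.Walk a b) (hp : ∀ z ∈ p.support, z ∈ insert s W)
    (ha : a ∈ W) : G.ReachableIn W a b ∨ ∃ x, G.ReachableIn W a x ∧ G.Adj x s := by
  induction p with
  | nil => exact .inl (.refl ha)
  | @cons a c b hac p ih =>
    have hc : c ∈ insert s W := hp c (by simp)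
    rcases hc with rfl | hc
    · exact .inr ⟨a, .refl ha, hac⟩
    have hac' : G.ReachableIn W a c := .of_adj hac ha hc
    rcases ih (fun z hz => hp z (by simp [hz])) hc with h | ⟨x, hx, hxs⟩
    · exact .inl (hac'.trans h)
    · exact .inr ⟨x, hac'.trans hx, hxs⟩

lemma eq_add_one_of_adj_getVert (p : G.Walk x y) (hp : ∀ z ∈ p.support, z ∈ W)
    (hmin : ∀ q : G.Walk x y, (∀ z ∈ q.support, z ∈ W) → p.length ≤ q.length)
    {i j : ℕ} (hij : i < j) (hj : j ≤ p.length) (hadj : G.Adj (p.getVert i) (p.getVert j)) :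
    j = i + 1 := by
  have hshort := hmin ((p.take i).append (cons hadj (p.drop j))) fun z hz => by
    rcases (mem_support_append_iff _ _).1 hz with hz | hz
    · rw [support_take] at hz
      exact hp z (List.mem_of_mem_take hz)
    · rw [support_cons, List.mem_cons, drop_support_eq_support_drop_min] at hz
      rcases hz with rfl | hz
      exacts [hp _ (p.getVert_mem_support i), hp z (List.mem_of_mem_drop hz)]
  simp only [length_append, take_length, length_cons, drop_length] at hshort
  omega

lemma isChordless_of_forall_length_le (p : G.Walk x y) (hp : ∀ z ∈ p.support, z ∈ W)
    (hmin : ∀ q : G.Walk x y, (∀ z ∈ q.support, z ∈ W) → p.length ≤ q.length) :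
    p.IsChordless := by
  rw [isChordless_iff_forall_mem_edges]
  intro u w hu hw huw
  obtain ⟨i, rfl, hi⟩ := mem_support_iff_exists_getVert.1 hu
  obtain ⟨j, rfl, hj⟩ := mem_support_iff_exists_getVert.1 hw
  rw [mk_mem_edges_iff_exists]
  rcases lt_trichotomy i j with hij | rfl | hij
  · obtain rfl := p.eq_add_one_of_adj_getVert hp hmin hij hj huw
    exact ⟨i, by omega, rfl⟩
  · exact absurd rfl huw.ne
  · obtain rfl := p.eq_add_one_of_adj_getVert hp hmin hij hi huw.symm
    exact ⟨j, by omega, Sym2.eq_swap⟩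

lemma IsChordless.reverse {p : G.Walk x y} (hp : p.IsChordless) : p.reverse.IsChordless := by
  rw [isChordless_iff_forall_mem_edges] at hp ⊢
  intro u w hu hw huw
  simp only [support_reverse, List.mem_reverse, edges_reverse] at hu hw ⊢
  exact hp hu hw huw

lemma isChordless_append {z : V} {p : G.Walk x y} {q : G.Walk y z} (hp : p.IsChordless)
    (hq : q.IsChordless)
    (hpq : ∀ u ∈ p.support, ∀ w ∈ q.support, G.Adj u w →
      u ∈ q.support ∨ w ∈ p.support) :
    (p.append q).IsChordless := by
  rw [isChordless_iff_forall_mem_edges] at hp hq ⊢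
  have hmixed : ∀ u ∈ p.support, ∀ w ∈ q.support, G.Adj u w →
      s(u, w) ∈ p.edges ∨ s(u, w) ∈ q.edges := by
    intro u hu w hw huw
    rcases hpq u hu w hw huw with hu' | hw'
    exacts [.inr (hq hu' hw huw), .inl (hp hu hw' huw)]
  intro u w hu hw huw
  rw [edges_append, List.mem_append]
  rw [mem_support_append_iff] at hu hw
  rcases hu with hu | hu <;> rcases hw with hw | hw
  · exact .inl (hp hu hw huw)
  · exact hmixed u hu w hw huw
  · rw [Sym2.eq_swap]
    exact hmixed w hw u hu huw.symm
  · exact .inr (hq hu hw huw)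

lemma two_le_length_of_not_adj (p : G.Walk x y) (hxy : x ≠ y) (hadj : ¬ G.Adj x y) :
    2 ≤ p.length := by
  match p with
  | .nil => exact absurd rfl hxy
  | .cons h .nil => exact absurd h hadj
  | .cons _ (.cons _ _) => simp

end Walk

lemma ReachableIn.exists_isPath_isChordless {W : Set V} {x y : V} (h : G.ReachableIn W x y) :
    ∃ p : G.Walk x y, p.IsPath ∧ p.IsChordless ∧ ∀ z ∈ p.support, z ∈ W := by
  classical
  obtain ⟨p, hp, hmin⟩ := (measure fun q : G.Walk x y => q.length).wf.has_min
    {q | ∀ z ∈ q.support, z ∈ W} h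
  have hbp : ∀ z ∈ p.bypass.support, z ∈ W :=
    fun z hz => hp z (p.support_bypass_subset_support hz)
  have hbmin : ∀ q : G.Walk x y, (∀ z ∈ q.support, z ∈ W) →
      p.bypass.length ≤ q.length :=
    fun q hq => p.length_bypass_le_length.trans (not_lt.1 (hmin q hq))
  exact ⟨p.bypass, p.bypass_isPath, p.bypass.isChordless_of_forall_length_le hbp hbmin, hbp⟩

lemma IsChordal.not_isChordless (hG : G.IsChordal) {v : V} {c : G.Walk v v} (hc : c.IsCycle)
    (h4 : 4 ≤ c.length) : ¬ c.IsChordless := by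
  intro hcl
  obtain ⟨a, b, ha, hb, hab, hnot⟩ := hG v c hc h4
  exact hnot (c.toSubgraph.mem_edgeSet.1 (c.mem_edges_toSubgraph.2 (hcl.mem_edges ha hb hab)))

/-- For a minimal separator `S` of `a` and `b` (with `W` the remaining vertices), any two
`x, y ∈ S` are joined by a chordless path through the component of `a`. -/
lemma exists_isChordless_path_through_component {W : Set V} {a b x y : V} (ha : a ∈ W)
    (hsep : ¬ G.ReachableIn W a b) (hx : G.ReachableIn (insert x W) a b)
    (hy : G.ReachableIn (insert y W) a b) :
    ∃ p : G.Walk x y, p.IsPath ∧ p.IsChordless ∧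
      ∀ z ∈ p.support, z = x ∨ z = y ∨ G.ReachableIn W a z := by
  have hnbr : ∀ s, G.ReachableIn (insert s W) a b →
      ∃ s', G.ReachableIn W a s' ∧ G.Adj s' s := by
    rintro s ⟨p, hp⟩
    exact (p.reachableIn_or_exists_adj hp ha).resolve_left hsep
  obtain ⟨x', hx', hxx'⟩ := hnbr x hx
  obtain ⟨y', hy', hyy'⟩ := hnbr y hy
  set X : Set V := {z | z = x ∨ z = y ∨ G.ReachableIn W a z}
  have hR : ∀ {c}, G.ReachableIn W a c → G.ReachableIn X a c :=
    fun h => h.reachableIn_setOf.mono fun z hz => .inr (.inr hz)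
  have hxy : G.ReachableIn X x y :=
    ((ReachableIn.of_adj hxx'.symm (.inl rfl) (.inr (.inr hx'))).trans
      ((hR hx').symm.trans (hR hy'))).trans (.of_adj hyy' (.inr (.inr hy')) (.inr (.inl rfl)))
  exact hxy.exists_isPath_isChordless

theorem IsChordal.isClique_of_minimal_separator (hG : G.IsChordal) {W S : Set V} {a b : V}
    (ha : a ∈ W) (hb : b ∈ W) (hsep : ¬ G.ReachableIn W a b)
    (hmin : ∀ s ∈ S, G.ReachableIn (insert s W) a b) : G.IsClique S := by
  intro x hx y hy hxy
  by_contra hnadj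
  obtain ⟨p, hp, hpc, hpR⟩ :=
    exists_isChordless_path_through_component ha hsep (hmin x hx) (hmin y hy)
  obtain ⟨q, hq, hqc, hqR⟩ := exists_isChordless_path_through_component hb (mt .symm hsep)
    (hmin x hx).symm (hmin y hy).symm
  have hp2 := p.two_le_length_of_not_adj hxy hnadj
  have hq2 := q.two_le_length_of_not_adj hxy hnadj
  have hcap : ∀ z ∈ p.support, z ∈ q.support → z = x ∨ z = y := by
    intro z hzp hzq
    rcases hpR z hzp with h | h | hza
    · exact .inl h
    · exact .inr h
    rcases hqR z hzq with h | h | hzb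
    · exact .inl h
    · exact .inr h
    exact ((hza.ne_and_not_adj_of_not_reachableIn hzb hsep).1 rfl).elim
  have hcyc : (p.append q.reverse).IsCycle := by
    refine hp.isCycle_append hq.reverse (fun z hzp hzq => ?_) (.inl (by omega))
    have hpnd := hp.support_nodup
    have hqnd := hq.reverse.support_nodup
    rw [← Walk.cons_tail_support, List.nodup_cons] at hpnd hqnd
    have hzq' : z ∈ q.support := by simpa using List.mem_of_mem_tail hzq
    rcases hcap z (List.mem_of_mem_tail hzp) hzq' with rfl | rfl
    exacts [hpnd.1 hzp, hqnd.1 hzq]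
  have hcl : (p.append q.reverse).IsChordless := by
    refine Walk.isChordless_append hpc hqc.reverse fun u hu w hw huw => ?_
    rw [Walk.support_reverse, List.mem_reverse] at hw ⊢
    rcases hpR u hu with rfl | rfl | hua
    · exact .inl q.start_mem_support
    · exact .inl q.end_mem_support
    rcases hqR w hw with rfl | rfl | hwb
    · exact .inr p.start_mem_support
    · exact .inr p.end_mem_support
    exact ((hua.ne_and_not_adj_of_not_reachableIn hwb hsep).2 huw).elim
  refine hG.not_isChordless hcyc ?_ hcl
  rw [Walk.length_append, Walk.length_reverse]
  omega

def IsSimplicialIn (G : SimpleGraph V) (U : Set V) (v : V) : Prop :=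
  G.IsClique (U ∩ G.neighborSet v)

lemma exists_minimal_separator [DecidableEq V] {U : Finset V} {a b : V} (hab : a ≠ b)
    (hnadj : ¬ G.Adj a b) :
    ∃ S ⊆ U, a ∉ S ∧ b ∉ S ∧ ¬ G.ReachableIn ↑(U \ S) a b ∧
      ∀ s ∈ S, G.ReachableIn (insert s ↑(U \ S)) a b := by
  classical
  set F := ((U.erase a).erase b).powerset.filter fun S => ¬ G.ReachableIn ↑(U \ S) a b
  have hF : (U.erase a).erase b ∈ F := by
    simp only [F, mem_filter, mem_powerset, subset_refl, true_and]
    rintro ⟨p, hp⟩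
    have hp' : ∀ z ∈ p.support, z ∈ insert b ({a} : Set V) := by
      intro z hz
      have := hp z hz
      simp only [coe_sdiff, coe_erase, Set.mem_sdiff, Set.mem_insert_iff,
        Set.mem_singleton_iff] at this ⊢
      tauto
    rcases p.reachableIn_or_exists_adj hp' rfl with h | ⟨x, hx, hxb⟩
    · exact hab h.right_mem.symm
    · exact hnadj ((show x = a from hx.right_mem) ▸ hxb)
  obtain ⟨S, hS⟩ := Finset.exists_minimal ⟨_, hF⟩
  obtain ⟨hSsub, hSsep⟩ := mem_filter.1 hS.prop
  rw [mem_powerset] at hSsub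
  refine ⟨S, hSsub.trans ((erase_subset _ _).trans (erase_subset _ _)),
    fun h => by simpa using hSsub h, fun h => by simpa using hSsub h, hSsep, fun s hs => ?_⟩
  by_contra h
  have hsU : s ∈ U := (mem_erase.1 (mem_erase.1 (hSsub hs)).2).2
  have hF' : S.erase s ∈ F := mem_filter.2 ⟨mem_powerset.2 ((erase_subset _ _).trans hSsub),
    by rwa [sdiff_erase hsU, coe_insert]⟩
  exact hS.not_lt hF' (erase_ssubset hs)

theorem IsChordal.exists_isSimplicialIn_notMem (hG : G.IsChordal) (U : Finset V) {K : Set V}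
    (hK : G.IsClique K) (hUK : ¬ (U : Set V) ⊆ K) :
    ∃ x ∈ U, x ∉ K ∧ G.IsSimplicialIn U x := by
  classical
  induction U using Finset.strongInduction generalizing K with
  | H U ih =>
  by_cases hU : G.IsClique (U : Set V)
  · obtain ⟨x, hxU, hxK⟩ := Set.not_subset.1 hUK
    exact ⟨x, hxU, hxK, hU.subset Set.inter_subset_left⟩
  obtain ⟨a, ha, b, hb, hab, hnadj⟩ : ∃ a ∈ U, ∃ b ∈ U, a ≠ b ∧ ¬ G.Adj a b := by
    simpa [IsClique, Set.Pairwise] using hU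
  obtain ⟨S, hSU, haS, hbS, hsep, hmin⟩ := exists_minimal_separator hab hnadj
  set W : Set V := ↑(U \ S)
  have haW : a ∈ W := by simp [W, ha, haS]
  have hbW : b ∈ W := by simp [W, hb, hbS]
  have hS : G.IsClique (S : Set V) := hG.isClique_of_minimal_separator haW hbW hsep hmin
  -- Induction on the side of `a` together with the clique `S` gives a simplicial vertex
  -- outside `S`, and its neighbourhood does not leave that side.
  have hside : ∀ {a b}, a ∈ W → b ∈ W → ¬ G.ReachableIn W a b →
      ∃ x, G.ReachableIn W a x ∧ G.IsSimplicialIn U x := by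
    intro a b ha hb hsep
    set A := U.filter fun z => z ∈ S ∨ G.ReachableIn W a z
    have hAU : A ⊂ U := filter_ssubset.2
      ⟨b, (mem_sdiff.1 hb).1, not_or.2 ⟨(mem_sdiff.1 hb).2, fun h => hsep h⟩⟩
    have haA : a ∈ A := mem_filter.2 ⟨(mem_sdiff.1 ha).1, .inr (.refl ha)⟩
    obtain ⟨x, hxA, hxS, hx⟩ := ih A hAU hS fun h => (mem_sdiff.1 ha).2 (h haA)
    have hxa : G.ReachableIn W a x := (mem_filter.1 hxA).2.resolve_left hxS
    refine ⟨x, hxa, hx.subset ?_⟩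
    rintro z ⟨hzU, hzx⟩
    refine ⟨mem_filter.2 ⟨hzU, ?_⟩, hzx⟩
    by_cases hzS : z ∈ S
    · exact .inl hzS
    · exact .inr (hxa.trans (.of_adj hzx hxa.right_mem (mem_sdiff.2 ⟨hzU, hzS⟩)))
  obtain ⟨x, hax, hx⟩ := hside haW hbW hsep
  obtain ⟨y, hby, hy⟩ := hside hbW haW (mt .symm hsep)
  have hxy := hax.ne_and_not_adj_of_not_reachableIn hby hsep
  by_cases hxK : x ∈ K
  · exact ⟨y, (mem_sdiff.1 hby.right_mem).1, fun hyK => hxy.2 (hK hxK hyK hxy.1), hy⟩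
  · exact ⟨x, (mem_sdiff.1 hax.right_mem).1, hxK, hx⟩

def IsCliqueIn (G : SimpleGraph V) (U t : Finset V) : Prop :=
  t ⊆ U ∧ G.IsClique (t : Set V)

lemma isMaxClique_iff_maximal_isCliqueIn_univ [Fintype V] {s : Finset V} :
    G.IsMaxClique s ↔ Maximal (G.IsCliqueIn univ) s := by
  constructor
  · rintro ⟨hs, hmax⟩
    exact ⟨⟨subset_univ _, hs⟩, fun t ht hst => (hmax t ht.2 hst).ge⟩
  · rintro ⟨⟨-, hs⟩, hmax⟩
    exact ⟨hs, fun t ht hst => hst.antisymm (hmax ⟨subset_univ _, ht⟩ hst)⟩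

lemma maximal_isCliqueIn_insert_iff [DecidableEq V] {U K s : Finset V} {v : V} (hvU : v ∉ U)
    (hK : ∀ z, z ∈ K ↔ z ∈ U ∧ G.Adj v z) (hKc : G.IsClique (K : Set V)) :
    Maximal (G.IsCliqueIn (insert v U)) s ↔
      s = insert v K ∨ (Maximal (G.IsCliqueIn U) s ∧ s ≠ K) := by
  have hKU : K ⊆ U := fun z hz => ((hK z).1 hz).1
  have hsub : ∀ t, G.IsCliqueIn (insert v U) t → v ∈ t → t ⊆ insert v K := by
    rintro t ⟨htU, htc⟩ hvt z hz
    rcases eq_or_ne z v with rfl | hzv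
    · exact mem_insert_self _ _
    · exact mem_insert_of_mem
        ((hK z).2 ⟨(mem_insert.1 (htU hz)).resolve_left hzv, htc hvt hz hzv.symm⟩)
  have hvK : G.IsCliqueIn (insert v U) (insert v K) :=
    ⟨insert_subset_insert _ hKU, by
      rw [coe_insert]
      exact hKc.insert fun z hz _ => ((hK z).1 hz).2⟩
  have hU : ∀ t, G.IsCliqueIn U t → G.IsCliqueIn (insert v U) t :=
    fun t ht => ⟨ht.1.trans (subset_insert _ _), ht.2⟩
  have hvt : ∀ t, G.IsCliqueIn (insert v U) t → v ∉ t → G.IsCliqueIn U t :=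
    fun t ht hvt =>
      ⟨fun z hz => (mem_insert.1 (ht.1 hz)).resolve_left (ne_of_mem_of_not_mem hz hvt), ht.2⟩
  constructor
  · intro hs
    by_cases hvs : v ∈ s
    · exact .inl (hs.eq_of_le hvK (hsub s hs.prop hvs))
    refine .inr ⟨⟨hvt s hs.prop hvs, fun t ht hst => hs.2 (hU t ht) hst⟩, ?_⟩
    rintro rfl
    exact hvU (hKU (hs.2 hvK (subset_insert _ _) (mem_insert_self _ _)))
  · rintro (rfl | ⟨hs, hsK⟩)
    · exact ⟨hvK, fun t ht hle => hsub t ht (hle (mem_insert_self _ _))⟩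
    refine ⟨hU s hs.prop, fun t ht hst => ?_⟩
    by_cases hvt' : v ∈ t
    · refine absurd (hs.eq_of_le ⟨hKU, hKc⟩ fun z hz => ?_) hsK
      exact (mem_insert.1 (hsub t ht hvt' (hst hz))).resolve_left
        (ne_of_mem_of_not_mem (hs.prop.1 hz) hvU)
    · exact hs.2 (hvt t ht hvt') hst

end SimpleGraph

def HasRunningIntersection {ι V : Type*} [DecidableEq V] (C : ι → Finset V) (r : ι → ℕ) :
    Prop :=
  ∀ j, (∃ i, r i < r j) → ∃ t, r t < r j ∧ ∀ i, r i < r j → C i ∩ C j ⊆ C t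

namespace HasRunningIntersection

variable {ι κ V : Type*} [DecidableEq V] {C : ι → Finset V} {r : ι → ℕ}

lemma of_subset {C' : ι → Finset V} (h : HasRunningIntersection C r) (hC : ∀ i, C i ⊆ C' i)
    (hC' : ∀ i j, i ≠ j → C' i ∩ C' j ⊆ C i ∩ C j) : HasRunningIntersection C' r := by
  intro j hj
  obtain ⟨t, ht, hCt⟩ := h j hj
  refine ⟨t, ht, fun i hi => (hC' i j ?_).trans ((hCt i hi).trans (hC t))⟩
  rintro rfl
  exact hi.ne rfl

lemma snoc {n : ℕ} {D : Fin n → Finset V} (h : HasRunningIntersection D Fin.val) {s : Finset V}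
    (t : Fin n) (ht : ∀ i, D i ∩ s ⊆ D t) :
    HasRunningIntersection (Fin.snoc D s : Fin (n + 1) → Finset V) Fin.val := by
  intro j hj
  induction j using Fin.lastCases with
  | last =>
    refine ⟨t.castSucc, by simp, fun i hi => ?_⟩
    induction i using Fin.lastCases with
    | last => simp at hi
    | cast i => simpa using ht i
  | cast j =>
    obtain ⟨t', ht', hCt⟩ := h j <| by
      obtain ⟨i, hi⟩ := hj
      induction i using Fin.lastCases with
      | last => simp at hi; omega
      | cast i => exact ⟨i, by simpa using hi⟩
    refine ⟨t'.castSucc, by simpa using ht', fun i hi => ?_⟩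
    induction i using Fin.lastCases with
    | last => simp at hi; omega
    | cast i => simpa using hCt i (by simpa using hi)

lemma comp {e : κ → ι} (h : HasRunningIntersection C r) (he : Function.Surjective e) :
    HasRunningIntersection (C ∘ e) (r ∘ e) := by
  intro j hj
  obtain ⟨t, ht, hCt⟩ := h (e j) (hj.elim fun i hi => ⟨e i, hi⟩)
  obtain ⟨t, rfl⟩ := he t
  exact ⟨t, ht, fun i hi => hCt (e i) hi⟩

end HasRunningIntersection

namespace SimpleGraph

variable {V : Type*} [DecidableEq V] {G : SimpleGraph V}

def IsCliqueOrdering (G : SimpleGraph V) (U : Finset V) {n : ℕ} (D : Fin n → Finset V) : Prop :=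
  Function.Injective D ∧ Set.range D = {s | Maximal (G.IsCliqueIn U) s} ∧
    HasRunningIntersection D Fin.val

lemma isCliqueOrdering_empty : G.IsCliqueOrdering ∅ ![∅] := by
  refine ⟨Function.injective_of_subsingleton _, ?_, fun j ⟨i, hi⟩ => by omega⟩
  ext s
  simp only [Set.mem_range, Matrix.cons_val_fin_one, exists_const, Set.mem_ofPred_eq]
  constructor
  · rintro rfl
    exact ⟨⟨subset_rfl, by simp⟩, fun t ht _ => ht.1⟩
  · intro hs
    exact (subset_empty.1 hs.prop.1).symm

namespace IsCliqueOrdering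

variable {U K : Finset V} {v : V} {n : ℕ} {D : Fin n → Finset V}

lemma subset (hD : G.IsCliqueOrdering U D) (i : Fin n) : D i ⊆ U := by
  have : D i ∈ {s | Maximal (G.IsCliqueIn U) s} := hD.2.1 ▸ ⟨i, rfl⟩
  exact this.prop.1

lemma insert_of_maximal (hD : G.IsCliqueOrdering U D) (hvU : v ∉ U)
    (hK : ∀ z, z ∈ K ↔ z ∈ U ∧ G.Adj v z) (hKc : G.IsClique (K : Set V))
    (hKmax : Maximal (G.IsCliqueIn U) K) :
    G.IsCliqueOrdering (insert v U) fun i => if D i = K then insert v K else D i := by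
  have hvD : ∀ i, v ∉ D i := fun i h => hvU (hD.subset i h)
  obtain ⟨hinj, hrange, hrip⟩ := hD
  have hmem : ∀ s, Maximal (G.IsCliqueIn U) s ↔ ∃ i, D i = s := fun s => by
    rw [← Set.mem_range, hrange]
    rfl
  have hvD' : ∀ i, v ∈ (if D i = K then insert v K else D i) → D i = K := by
    intro i hi
    by_contra h
    exact hvD i (by simpa [h] using hi)
  refine ⟨fun i j hij => ?_, ?_, hrip.of_subset (fun i => ?_) fun i j hij z hz => ?_⟩
  · dsimp only at hij
    by_cases hi : D i = K <;> by_cases hj : D j = K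
    · exact hinj (hi.trans hj.symm)
    · rw [if_pos hi, if_neg hj] at hij
      exact absurd (hij ▸ mem_insert_self v K) (hvD j)
    · rw [if_neg hi, if_pos hj] at hij
      exact absurd (hij ▸ mem_insert_self v K) (hvD i)
    · rw [if_neg hi, if_neg hj] at hij
      exact hinj hij
  · ext s
    rw [Set.mem_ofPred_eq, maximal_isCliqueIn_insert_iff hvU hK hKc]
    constructor
    · rintro ⟨i, rfl⟩
      dsimp only
      split_ifs with h
      · exact .inl rfl
      · exact .inr ⟨(hmem _).2 ⟨i, rfl⟩, h⟩
    · rintro (rfl | ⟨hs, hsK⟩)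
      · obtain ⟨i, hi⟩ := (hmem K).1 hKmax
        exact ⟨i, if_pos hi⟩
      · obtain ⟨i, rfl⟩ := (hmem _).1 hs
        exact ⟨i, if_neg hsK⟩
  · split_ifs with h
    · exact h ▸ subset_insert _ _
    · exact subset_rfl
  · rw [mem_inter] at hz ⊢
    rcases eq_or_ne z v with rfl | hzv
    · exact absurd (hinj ((hvD' i hz.1).trans (hvD' j hz.2).symm)) hij
    have hz' : ∀ k, z ∈ (if D k = K then insert v K else D k) → z ∈ D k := by
      intro k hk
      split_ifs at hk with h
      · exact h ▸ (mem_insert.1 hk).resolve_left hzv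
      · exact hk
    exact ⟨hz' i hz.1, hz' j hz.2⟩

lemma insert_of_not_maximal (hD : G.IsCliqueOrdering U D) (hvU : v ∉ U)
    (hK : ∀ z, z ∈ K ↔ z ∈ U ∧ G.Adj v z) (hKc : G.IsClique (K : Set V))
    (hKmax : ¬ Maximal (G.IsCliqueIn U) K) :
    G.IsCliqueOrdering (insert v U) (Fin.snoc D (insert v K) : Fin (n + 1) → Finset V) := by
  have hvD : ∀ i, v ∉ D i := fun i h => hvU (hD.subset i h)
  obtain ⟨hinj, hrange, hrip⟩ := hD
  have hfin : {t | G.IsCliqueIn U t}.Finite :=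
    U.powerset.finite_toSet.subset fun t ht => mem_powerset.2 ht.1
  obtain ⟨E, hKE, hE⟩ := hfin.exists_le_maximal (a := K) ⟨fun z hz => ((hK z).1 hz).1, hKc⟩
  obtain ⟨t, rfl⟩ : E ∈ Set.range D := hrange ▸ hE
  have hnew : insert v K ∉ Set.range D := fun ⟨i, hi⟩ => hvD i (hi ▸ mem_insert_self v K)
  refine ⟨Fin.snoc_injective_iff.2 ⟨hinj, hnew⟩, ?_, hrip.snoc t fun i z hz => ?_⟩
  · ext s
    rw [Fin.range_snoc, hrange, Set.mem_ofPred_eq, maximal_isCliqueIn_insert_iff hvU hK hKc]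
    simp only [Set.mem_insert_iff, Set.mem_ofPred_eq]
    exact or_congr_right ⟨fun hs => ⟨hs, fun h => hKmax (h ▸ hs)⟩, And.left⟩
  · rw [mem_inter] at hz
    exact hKE ((mem_insert.1 hz.2).resolve_left (ne_of_mem_of_not_mem hz.1 (hvD i)))

end IsCliqueOrdering

theorem IsChordal.exists_isCliqueOrdering (hG : G.IsChordal) (U : Finset V) :
    ∃ n, ∃ D : Fin n → Finset V, G.IsCliqueOrdering U D := by
  classical
  induction U using Finset.strongInduction with
  | H U ih =>
  rcases U.eq_empty_or_nonempty with rfl | hU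
  · exact ⟨1, _, isCliqueOrdering_empty⟩
  obtain ⟨v, hvU, -, hv⟩ := hG.exists_isSimplicialIn_notMem U (K := ∅) (by simp)
    (by simpa [Set.subset_empty_iff] using hU.ne_empty)
  obtain ⟨n, D, hD⟩ := ih (U.erase v) (erase_ssubset hvU)
  set K := (U.erase v).filter (G.Adj v)
  have hK : ∀ z, z ∈ K ↔ z ∈ U.erase v ∧ G.Adj v z := fun z => mem_filter
  have hKc : G.IsClique (K : Set V) := by
    refine hv.subset fun z hz => ?_
    obtain ⟨hzU, hvz⟩ := (hK z).1 hz
    exact ⟨(mem_erase.1 hzU).2, hvz⟩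
  rw [← insert_erase hvU]
  by_cases hKmax : Maximal (G.IsCliqueIn (U.erase v)) K
  · exact ⟨n, _, hD.insert_of_maximal (notMem_erase v U) hK hKc hKmax⟩
  · exact ⟨n + 1, _, hD.insert_of_not_maximal (notMem_erase v U) hK hKc hKmax⟩

variable {ι : Type*}

lemma IsAcyclic.mem_of_reachableIn {T : SimpleGraph ι} (hT : T.IsAcyclic) {W : Set ι}
    {i j k : ι} (h : T.ReachableIn W i j) {p : T.Walk i j} (hp : p.IsPath) (hk : k ∈ p.support) :
    k ∈ W := by
  classical
  obtain ⟨q, hq⟩ := h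
  have hpq : p = q.bypass := congrArg Subtype.val
    ((hT.subsingleton_path i j).elim ⟨p, hp⟩ ⟨q.bypass, q.bypass_isPath⟩)
  exact hq k (q.support_bypass_subset_support (hpq ▸ hk))

def parentGraph (par : ι → ι) : SimpleGraph ι :=
  fromRel fun i j => par i = j

section parentGraph

variable {par : ι → ι}

lemma parentGraph_adj_parent {i : ι} (h : par i ≠ i) : (parentGraph par).Adj i (par i) :=
  (fromRel_adj _ _ _).2 ⟨h.symm, .inl rfl⟩

lemma exists_fixedPoint_reachable_parentGraph (r : ι → ℕ)
    (hr : ∀ i, par i ≠ i → r (par i) < r i) (i : ι) :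
    ∃ j, par j = j ∧ (parentGraph par).Reachable i j := by
  induction hn : r i using Nat.strong_induction_on generalizing i with
  | _ n ih =>
  by_cases hi : par i = i
  · exact ⟨i, hi, .refl i⟩
  obtain ⟨j, hj, hreach⟩ := ih _ (hn ▸ hr i hi) (par i) rfl
  exact ⟨j, hj, (parentGraph_adj_parent hi).reachable.trans hreach⟩

theorem isTree_parentGraph [Nonempty ι] (r : ι → ℕ)
    (hr : ∀ i, par i ≠ i → r (par i) < r i)
    (hfix : ∀ i j, par i = i → par j = j → i = j) : (parentGraph par).IsTree := by
  classical
  refine ⟨(connected_iff _).2 ⟨fun i j => ?_, inferInstance⟩, fun v c hc => ?_⟩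
  · obtain ⟨i', hi', hi⟩ := exists_fixedPoint_reachable_parentGraph r hr i
    obtain ⟨j', hj', hj⟩ := exists_fixedPoint_reachable_parentGraph r hr j
    exact hi.trans (hfix i' j' hi' hj' ▸ hj.symm)
  -- The two neighbours of the vertex of largest rank on a cycle would both be its parent.
  obtain ⟨m, hm, hmax⟩ := c.support.toFinset.exists_max_image r ⟨v, by simp⟩
  rw [List.mem_toFinset] at hm
  set c' := c.rotate m hm
  have hc' : c'.IsCycle := hc.rotate hm
  have hpar : ∀ u ∈ c'.support, (parentGraph par).Adj m u → u = par m := by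
    intro u hu hmu
    rcases (fromRel_adj _ _ _).1 hmu with ⟨hne, h | h⟩
    · exact h.symm
    · have hlt := hr u (h ▸ hne)
      have hle := hmax u (by simpa [c', Walk.mem_support_rotate_iff] using hu)
      rw [h] at hlt
      omega
  exact hc'.snd_ne_penultimate
    ((hpar _ (c'.getVert_mem_support 1) (Walk.adj_snd hc'.not_nil)).trans
      (hpar _ (c'.getVert_mem_support _) (Walk.adj_penultimate hc'.not_nil).symm).symm)

end parentGraph

end SimpleGraph

namespace HasRunningIntersection

open SimpleGraph

variable {ι V : Type*} [DecidableEq V] {C : ι → Finset V} {r : ι → ℕ} {par : ι → ι}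

lemma reachableIn_parentGraph (hr : Function.Injective r)
    (hlt : ∀ j, (∃ i, r i < r j) → r (par j) < r j)
    (hsub : ∀ i j, r i < r j → C i ∩ C j ⊆ C (par j)) {x : V} {i j : ι} (hi : x ∈ C i)
    (hj : x ∈ C j) : (parentGraph par).ReachableIn {k | x ∈ C k} i j := by
  have hdown : ∀ i, x ∈ C i → ∃ m, x ∈ C m ∧ (∀ k, x ∈ C k → r m ≤ r k) ∧
      (parentGraph par).ReachableIn {k | x ∈ C k} i m := by
    intro i hi
    induction hn : r i using Nat.strong_induction_on generalizing i with
    | _ n ih =>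
    by_cases hmin : ∀ k, x ∈ C k → r i ≤ r k
    · exact ⟨i, hi, hmin, .refl hi⟩
    obtain ⟨k, hk, hki⟩ : ∃ k, x ∈ C k ∧ r k < r i := by simpa using hmin
    have hpi : x ∈ C (par i) := hsub k i hki (mem_inter.2 ⟨hk, hi⟩)
    have hlt' := hlt i ⟨k, hki⟩
    obtain ⟨m, hm, hmmin, hreach⟩ := ih _ (hn ▸ hlt') (par i) hpi rfl
    refine ⟨m, hm, hmmin, (ReachableIn.of_adj (W := {k | x ∈ C k}) ?_ hi hpi).trans hreach⟩
    exact parentGraph_adj_parent fun h => hlt'.ne (congrArg r h)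
  obtain ⟨m, hm, hmmin, him⟩ := hdown i hi
  obtain ⟨m', hm', hm'min, hjm'⟩ := hdown j hj
  obtain rfl : m = m' := hr (le_antisymm (hmmin m' hm') (hm'min m hm))
  exact him.trans hjm'.symm

/-- Joining every member to the earlier member given by the running intersection property
yields a clique tree. -/
theorem exists_isTree [Nonempty ι] (hr : Function.Injective r) (h : HasRunningIntersection C r) :
    ∃ T : SimpleGraph ι, T.IsTree ∧
      ∀ i j (p : T.Walk i j), p.IsPath → ∀ k ∈ p.support, C i ∩ C j ⊆ C k := by
  classical
  let par : ι → ι := fun j => if hj : ∃ i, r i < r j then (h j hj).choose else j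
  have hlt : ∀ j, (∃ i, r i < r j) → r (par j) < r j := fun j hj => by
    simp only [par, dif_pos hj]
    exact (h j hj).choose_spec.1
  have hsub : ∀ i j, r i < r j → C i ∩ C j ⊆ C (par j) := fun i j hij => by
    simp only [par, dif_pos (show ∃ i', r i' < r j from ⟨i, hij⟩)]
    exact (h j ⟨i, hij⟩).choose_spec.2 i hij
  have hfix : ∀ j, par j = j → ∀ i, r j ≤ r i :=
    fun j hj i => not_lt.1 fun hij => (hlt j ⟨i, hij⟩).ne (congrArg r hj)
  have hT : (parentGraph par).IsTree := by
    refine isTree_parentGraph r (fun j hj => hlt j ?_)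
      fun i j hi hj => hr (le_antisymm (hfix i hi j) (hfix j hj i))
    by_contra hroot
    exact hj (dif_neg hroot)
  refine ⟨parentGraph par, hT, fun i j p hp k hk x hx => ?_⟩
  rw [mem_inter] at hx
  exact hT.isAcyclic.mem_of_reachableIn (reachableIn_parentGraph hr hlt hsub hx.1 hx.2) hp hk

end HasRunningIntersection

/-- **Existence of a clique tree.**  Every chordal graph (with a nonempty list
`C 0, …, C (l-1)` enumerating its maximal cliques) admits a tree `T` on the set
of cliques satisfying the clique intersection property: for any two distinct
cliques `C i` and `C j`, the intersection `C i ∩ C j` is contained in every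
clique on the (unique) path joining them in `T`. -/
theorem chordal_clique_tree {V : Type*} [Fintype V] [DecidableEq V] {l : ℕ} (hl : 0 < l)
    (G : SimpleGraph V) (hG : G.IsChordal)
    (C : Fin l → Finset V)
    (hinj : Function.Injective C)
    (hclique : ∀ i, G.IsMaxClique (C i))
    (hall : ∀ s : Finset V, G.IsMaxClique s → ∃ i, C i = s) :
    ∃ T : SimpleGraph (Fin l), T.IsTree ∧
      ∀ i j : Fin l, i ≠ j → ∀ (p : T.Walk i j), p.IsPath →
        ∀ k ∈ p.support, C i ∩ C j ⊆ C k := by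
  obtain ⟨n, D, hDinj, hDrange, hDrip⟩ := hG.exists_isCliqueOrdering univ
  have hmax : ∀ s, G.IsMaxClique s ↔ s ∈ Set.range D := fun s => by
    rw [hDrange, Set.mem_ofPred_eq, SimpleGraph.isMaxClique_iff_maximal_isCliqueIn_univ]
  choose e he using fun i => (hmax (C i)).1 (hclique i)
  have he_surj : Function.Surjective e := fun k => by
    obtain ⟨i, hi⟩ := hall (D k) ((hmax _).2 ⟨k, rfl⟩)
    exact ⟨i, hDinj ((he i).trans hi)⟩
  have hre : Function.Injective (Fin.val ∘ e) := fun i j hij => by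
    rw [← hinj.eq_iff, ← he i, ← he j, Fin.val_injective hij]
  have : Nonempty (Fin l) := ⟨⟨0, hl⟩⟩
  obtain ⟨T, hT, hcip⟩ := (hDrip.comp he_surj).exists_isTree hre
  rw [show D ∘ e = C from funext he] at hcip
  exact ⟨T, hT, fun i j _ => hcip i j⟩
end

section
/- In a clique tree of a chordal graph satisfying the clique intersection property, for every edge (C_i, C_j) of the tree, the intersection C_i ∩ C_j is a minimal vertex separator of the graph or is empty if the graph is disconnected accordingly; in particular, removing C_i ∩ C_j from the graph disconnects every vertex of C_i \ C_j from every vertex of C_j \ C_i. -/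
open Finset

/-- Every clique of a finite graph extends to a maximal clique. -/
lemma exists_isMaxClique_superset {V : Type*} [Fintype V] [DecidableEq V] (G : SimpleGraph V)
    (s : Finset V) (hs : G.IsClique ↑s) : ∃ t, G.IsMaxClique t ∧ s ⊆ t := by
  classical
  set S : Finset (Finset V) := Finset.univ.filter (fun t => G.IsClique ↑t ∧ s ⊆ t) with hS
  have hmem : ∀ t, t ∈ S ↔ G.IsClique ↑t ∧ s ⊆ t := by
    intro t; simp [hS]
  have hne : S.Nonempty := ⟨s, (hmem s).2 ⟨hs, subset_rfl⟩⟩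
  obtain ⟨t, htS, hmax⟩ := S.exists_max_image Finset.card hne
  obtain ⟨htc, hst⟩ := (hmem t).1 htS
  refine ⟨t, ⟨htc, fun t' ht'c htt' => ?_⟩, hst⟩
  have : t' ∈ S := (hmem t').2 ⟨ht'c, hst.trans htt'⟩
  exact Finset.eq_of_subset_of_card_le htt' (hmax t' this)

/-- In a tree with edge `i j`, a path from `i` avoiding `j` and a path from `j`
avoiding `i` are vertex-disjoint. -/
lemma tree_cut_disjoint {l : ℕ} {T : SimpleGraph (Fin l)} (hT : T.IsTree)
    {i j k m : Fin l} (hij : T.Adj i j)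
    (p : T.Walk i k) (hjp : j ∉ p.support)
    (q : T.Walk j m) (hiq : i ∉ q.support) :
    ∀ t, t ∈ p.support → t ∉ q.support := by
  intro t htp htq
  set w : T.Walk i j := (p.takeUntil t htp).append (q.takeUntil t htq).reverse with hw
  have hedge : s(i, j) ∉ w.edges := by
    intro he
    rw [hw, SimpleGraph.Walk.edges_append, List.mem_append] at he
    rcases he with h | h
    · exact hjp (SimpleGraph.Walk.snd_mem_support_of_mem_edges p
        (p.edges_takeUntil_subset htp h))
    · rw [SimpleGraph.Walk.edges_reverse, List.mem_reverse] at h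
      exact hiq (SimpleGraph.Walk.fst_mem_support_of_mem_edges q
        (q.edges_takeUntil_subset htq h))
  have huniq := hT.existsUnique_path i j
  have h1 : (w.toPath : T.Walk i j).IsPath := (w.toPath).2
  have h2 : (SimpleGraph.Path.singleton hij : T.Walk i j).IsPath :=
    (SimpleGraph.Path.singleton hij).2
  have heq : (w.toPath : T.Walk i j) = (SimpleGraph.Path.singleton hij : T.Walk i j) :=
    huniq.unique h1 h2
  have : s(i, j) ∈ (w.toPath : T.Walk i j).edges := by
    rw [heq]; simp [SimpleGraph.Path.singleton]
  exact hedge (SimpleGraph.Walk.edges_toPath_subset w this)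

/-- Crossing lemma: a vertex lying in a clique on each side of the tree edge
`i j` lies in `C i ∩ C j`. -/
lemma cross_mem_inter {V : Type*} [DecidableEq V] {l : ℕ}
    (C : Fin l → Finset V)
    {T : SimpleGraph (Fin l)} (hT : T.IsTree)
    (hCIP : ∀ i j : Fin l, ∀ (p : T.Walk i j), p.IsPath → ∀ k ∈ p.support, C i ∩ C j ⊆ C k)
    {i j k m : Fin l} (hij : T.Adj i j)
    (p : T.Walk i k) (hp : p.IsPath) (hjp : j ∉ p.support)
    (q : T.Walk j m) (hq : q.IsPath) (hiq : i ∉ q.support)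
    {x : V} (hxk : x ∈ C k) (hxm : x ∈ C m) : x ∈ C i ∩ C j := by
  set w : T.Walk k m := p.reverse.append (SimpleGraph.Walk.cons hij q) with hw
  have hsup : w.support = p.support.reverse ++ q.support := by
    rw [hw, SimpleGraph.Walk.support_append, SimpleGraph.Walk.support_reverse,
      SimpleGraph.Walk.support_cons, List.tail_cons]
  have hwpath : w.IsPath := by
    rw [SimpleGraph.Walk.isPath_def, hsup]
    refine List.Nodup.append (List.nodup_reverse.2 hp.support_nodup) hq.support_nodup ?_
    intro t ht ht'
    exact tree_cut_disjoint hT hij p hjp q hiq t (List.mem_reverse.1 ht) ht'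
  have hiw : i ∈ w.support := by
    rw [hsup]; exact List.mem_append_left _ (List.mem_reverse.2 p.start_mem_support)
  have hjw : j ∈ w.support := by
    rw [hsup]; exact List.mem_append_right _ q.start_mem_support
  have hsubi := hCIP k m w hwpath i hiw
  have hsubj := hCIP k m w hwpath j hjw
  have hx : x ∈ C k ∩ C m := Finset.mem_inter.2 ⟨hxk, hxm⟩
  exact Finset.mem_inter.2 ⟨hsubi hx, hsubj hx⟩

/-- Every tree vertex is on one side of the edge `i j`. -/
lemma side_total {l : ℕ} {T : SimpleGraph (Fin l)} (hT : T.IsTree)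
    {i j : Fin l} (hij : T.Adj i j) (k : Fin l) :
    (∃ p : T.Walk i k, p.IsPath ∧ j ∉ p.support) ∨
    (∃ q : T.Walk j k, q.IsPath ∧ i ∉ q.support) := by
  obtain ⟨w⟩ := hT.isConnected.preconnected i k
  set p : T.Walk i k := (w.toPath : T.Walk i k) with hp
  have hppath : p.IsPath := w.toPath.2
  by_cases hj : j ∈ p.support
  · right
    refine ⟨p.dropUntil j hj, hppath.dropUntil hj, ?_⟩
    intro hi
    have hspec := p.take_spec hj
    have hnd : p.support.Nodup := hppath.support_nodup
    rw [← hspec, SimpleGraph.Walk.support_append] at hnd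
    have hdisj := List.disjoint_of_nodup_append hnd
    have hitail : i ∈ (p.dropUntil j hj).support.tail := by
      have := (p.dropUntil j hj).support_eq_cons
      rw [this] at hi
      rcases List.mem_cons.1 hi with h | h
      · exact absurd h hij.ne
      · exact h
    exact hdisj ((p.takeUntil j hj).start_mem_support) hitail
  · left; exact ⟨p, hppath, hj⟩

/-- **Clique-tree edges give vertex separators.**  Let `T` be a clique tree of
a chordal graph `G` satisfying the clique intersection property.  Then for
every edge `(C i, C j)` of `T`, the intersection `C i ∩ C j` separates every
vertex of `C i \ C j` from every vertex of `C j \ C i`: every walk in `G`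
between such vertices passes through `C i ∩ C j`. -/
theorem clique_tree_edge_separates {V : Type*} [Fintype V] [DecidableEq V] {l : ℕ}
    (G : SimpleGraph V) (hG : G.IsChordal)
    (C : Fin l → Finset V)
    (hinj : Function.Injective C)
    (hclique : ∀ i, G.IsMaxClique (C i))
    (hall : ∀ s : Finset V, G.IsMaxClique s → ∃ i, C i = s)
    (T : SimpleGraph (Fin l)) (hT : T.IsTree)
    (hCIP : ∀ i j : Fin l, ∀ (p : T.Walk i j), p.IsPath → ∀ k ∈ p.support, C i ∩ C j ⊆ C k) :
    ∀ i j : Fin l, T.Adj i j →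
      ∀ u ∈ C i, u ∉ C j → ∀ v ∈ C j, v ∉ C i →
        ∀ p : G.Walk u v, ∃ x ∈ p.support, x ∈ C i ∩ C j := by
  classical
  intro i j hij u hu huj v hv hvi p
  set onB : V → Prop := fun x => ∃ m, (∃ q : T.Walk j m, q.IsPath ∧ i ∉ q.support) ∧ x ∈ C m
    with honB
  have hcross : ∀ x : V,
      (∃ k, (∃ pa : T.Walk i k, pa.IsPath ∧ j ∉ pa.support) ∧ x ∈ C k) →
      onB x → x ∈ C i ∩ C j := by
    rintro x ⟨k, ⟨pa, hpa, hja⟩, hxk⟩ ⟨m, ⟨qb, hqb, hib⟩, hxm⟩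
    exact cross_mem_inter C hT hCIP hij pa hpa hja qb hqb hib hxk hxm
  have hvertex : ∀ x y : V, G.Adj x y → ∃ k, x ∈ C k ∧ y ∈ C k := by
    intro x y hxy
    have hclq : G.IsClique (↑({x, y} : Finset V)) := by
      intro a ha b hb hne
      simp only [Finset.coe_insert, Finset.coe_singleton, Set.mem_insert_iff,
        Set.mem_singleton_iff] at ha hb
      rcases ha with rfl | rfl <;> rcases hb with rfl | rfl
      · exact absurd rfl hne
      · exact hxy
      · exact hxy.symm
      · exact absurd rfl hne
    obtain ⟨t, hmax, hsub⟩ := exists_isMaxClique_superset G _ hclq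
    obtain ⟨k, hk⟩ := hall t hmax
    exact ⟨k, by rw [hk]; exact hsub (by simp), by rw [hk]; exact hsub (by simp)⟩
  have hnil_i : ∃ pa : T.Walk i i, pa.IsPath ∧ j ∉ pa.support :=
    ⟨SimpleGraph.Walk.nil, SimpleGraph.Walk.IsPath.nil, by simp [hij.ne']⟩
  have hnil_j : ∃ q : T.Walk j j, q.IsPath ∧ i ∉ q.support :=
    ⟨SimpleGraph.Walk.nil, SimpleGraph.Walk.IsPath.nil, by simp [hij.ne]⟩
  have hnotBu : ¬ onB u := by
    rintro ⟨m, hm, hum⟩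
    have := hcross u ⟨i, hnil_i, hu⟩ ⟨m, hm, hum⟩
    exact huj (Finset.mem_inter.1 this).2
  have honBv : onB v := ⟨j, hnil_j, hv⟩
  have key : ∀ (a b : V) (w : G.Walk a b), ¬ onB a → onB b →
      ∃ x ∈ w.support, x ∈ C i ∩ C j := by
    intro a b w
    induction w with
    | nil => intro ha hb; exact absurd hb ha
    | @cons a c b h q ih =>
      intro ha hb
      by_cases hc : onB c
      · refine ⟨c, ?_, ?_⟩
        · rw [SimpleGraph.Walk.support_cons]
          exact List.mem_cons.2 (Or.inr q.start_mem_support)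
        · obtain ⟨k, hak, hck⟩ := hvertex a c h
          rcases side_total hT hij k with hA | hB
          · exact hcross c ⟨k, hA, hck⟩ hc
          · exact absurd ⟨k, hB, hak⟩ ha
      · obtain ⟨x, hx, hx'⟩ := ih hc hb
        refine ⟨x, ?_, hx'⟩
        rw [SimpleGraph.Walk.support_cons]
        exact List.mem_cons.2 (Or.inr hx)
  exact key u v p hnotBu honBv
end
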